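/- arXiv:2601.09390 — 2 statements merged into one kernel-verified Lean document; each statement's English description precedes it below -/
import Mathlib

section
/- For m ≥ 4, the minimum distance of BiD^⊥(m,2,2) is exactly 6: there exist weight-6 codewords (e.g., (X_1+X_1²)(1 + X_2···X_m + X_2²···X_m²)) and no nonzero codewords of weight at most 5. -/
open Finset

abbrev F4 := GaloisField 2 2

noncomputable def toF4 : ZMod 2 →+* F4 := ZMod.castHom dvd_rfl F4

def dotp {m : ℕ} (i j : Fin m → ZMod 3) : ZMod 3 := ∑ l, i l * j l

noncomputable def dft {m : ℕ} (α : F4) (f : (Fin m → ZMod 3) → ZMod 2)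
    (j : Fin m → ZMod 3) : F4 :=
  ∑ i : Fin m → ZMod 3, toF4 (f i) * α ^ (dotp i j).val

noncomputable def code (m : ℕ) (α : F4) (W : Set ℕ) :
    Set ((Fin m → ZMod 3) → ZMod 2) :=
  {f | ∀ j : Fin m → ZMod 3, hammingNorm j ∉ W → dft α f j = 0}

/-!
A weight-two check `j = e a + v • e b` (`v ≠ 0`) sees only the coordinates `a` and `b`: if the
support of `f` is `p 0, …, p (n - 1)`, it says `∑ₖ α ^ (p k a + v * p k b) = 0`. Since
`1 + α + α² = 0` and `1, α` are independent over `ZMod 2`, this means that the residues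
`p k a + v * p k b` occur with multiplicities of equal parity, a condition on the pair of columns
`p · a`, `p · b` that is unchanged by translating all points. For `n ≤ 5` the pairs of columns
satisfying it are classified by exhaustive search, and comparing three or four coordinates shows
that no `n ≤ 5` distinct points pass all checks; `n = 5` is the case that needs `m ≥ 4`.

The codeword `(X₁ + X₁²)(1 + X₂⋯Xₘ + X₂²⋯Xₘ²)` consists of the six monomials
`X₁ ^ a (X₂⋯Xₘ) ^ c` with `a ≠ 0`, and at a weight-two `j` its transform is
`∑ a c, α ^ (a * j₁ + c * (j₂ + ⋯ + jₘ))`: either the sum over `c` vanishes for each `a`, or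
`j₁ = j₂ + ⋯ + jₘ = 0` and the six terms are all `1`.
-/

/-- The coordinates of `α ^ z.val` in the basis `1, α` of `F4` over `ZMod 2`. -/
def unitCoeff (z : ZMod 3) : ZMod 2 := if z = 1 then 0 else 1

def alphaCoeff (z : ZMod 3) : ZMod 2 := if z = 0 then 0 else 1

/-- Equivalently, the residues `0, 1, 2` occur in `z` with multiplicities of the same parity. -/
def IsBalanced {n : ℕ} (z : Fin n → ZMod 3) : Prop :=
  ∑ k, unitCoeff (z k) = 0 ∧ ∑ k, alphaCoeff (z k) = 0

instance {n : ℕ} (z : Fin n → ZMod 3) : Decidable (IsBalanced z) :=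
  inferInstanceAs (Decidable (_ ∧ _))

section Field

variable {α : F4}

lemma alpha_ne_zero (hα : α ^ 2 = α + 1) : α ≠ 0 := by
  rintro rfl
  simp at hα

lemma alpha_ne_one (hα : α ^ 2 = α + 1) : α ≠ 1 := by
  rintro rfl
  have : (2 : F4) = 1 := by linear_combination -hα
  simp [CharTwo.two_eq_zero] at this

lemma alpha_pow_three (hα : α ^ 2 = α + 1) : α ^ 3 = 1 := by
  linear_combination (α + 1) * hα + α * CharTwo.two_eq_zero (R := F4)

lemma alpha_pow_val_add (hα : α ^ 2 = α + 1) (x y : ZMod 3) :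
    α ^ (x + y).val = α ^ x.val * α ^ y.val := by
  rw [ZMod.val_add, ← pow_eq_pow_mod _ (alpha_pow_three hα), pow_add]

lemma sum_alpha_pow_val (hα : α ^ 2 = α + 1) : ∑ z : ZMod 3, α ^ z.val = 0 := by
  rw [show (univ : Finset (ZMod 3)) = {0, 1, 2} from rfl, sum_insert (by decide),
    sum_pair (by decide), show (2 : ZMod 3).val = 2 from rfl]
  simp only [ZMod.val_zero, ZMod.val_one, pow_zero, pow_one]
  linear_combination hα + (1 + α) * CharTwo.two_eq_zero (R := F4)

lemma sum_alpha_pow_add_mul (hα : α ^ 2 = α + 1) (x : ZMod 3) {y : ZMod 3} (hy : y ≠ 0) :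
    ∑ c : ZMod 3, α ^ (x + c * y).val = 0 :=
  (((Equiv.mulRight₀ y hy).trans (Equiv.addLeft x)).sum_comp fun z => α ^ z.val).trans
    (sum_alpha_pow_val hα)

lemma alpha_pow_val_eq (hα : α ^ 2 = α + 1) (z : ZMod 3) :
    α ^ z.val = toF4 (unitCoeff z) + toF4 (alphaCoeff z) * α := by
  obtain rfl | rfl | rfl : z = 0 ∨ z = 1 ∨ z = 2 := by revert z; decide
  · simp [unitCoeff, alphaCoeff]
  · simp [unitCoeff, alphaCoeff, show (1 : ZMod 3).val = 1 from rfl]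
  · rw [show (2 : ZMod 3).val = 2 from rfl, hα, add_comm]
    simp [unitCoeff, alphaCoeff, show (2 : ZMod 3) ≠ 1 by decide, show (2 : ZMod 3) ≠ 0 by decide]

lemma eq_zero_of_toF4_add_mul_alpha_eq_zero (hα : α ^ 2 = α + 1) {a b : ZMod 2}
    (h : toF4 a + toF4 b * α = 0) : a = 0 ∧ b = 0 := by
  have cases : ∀ c : ZMod 2, c = 0 ∨ c = 1 := by decide
  rcases cases a with rfl | rfl <;> rcases cases b with rfl | rfl
  · exact ⟨rfl, rfl⟩
  · exact absurd (by simpa using h) (alpha_ne_zero hα)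
  · simp at h
  · refine absurd ?_ (alpha_ne_one hα)
    simp only [map_one, one_mul] at h
    linear_combination h - CharTwo.two_eq_zero (R := F4)

lemma sum_alpha_pow_eq_zero_iff (hα : α ^ 2 = α + 1) {n : ℕ} (z : Fin n → ZMod 3) :
    ∑ k, α ^ (z k).val = 0 ↔ IsBalanced z := by
  have hsum : ∑ k, α ^ (z k).val =
      toF4 (∑ k, unitCoeff (z k)) + toF4 (∑ k, alphaCoeff (z k)) * α := by
    simp only [alpha_pow_val_eq hα, map_sum, sum_add_distrib, sum_mul]
  rw [hsum]
  exact ⟨eq_zero_of_toF4_add_mul_alpha_eq_zero hα, fun ⟨hu, ha⟩ => by simp [hu, ha]⟩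

end Field

lemma dft_eq_sum_support {m : ℕ} (α : F4) (f : (Fin m → ZMod 3) → ZMod 2)
    (j : Fin m → ZMod 3) : dft α f j = ∑ i ∈ {i | f i ≠ 0}, α ^ (dotp i j).val := by
  rw [dft, sum_filter]
  refine sum_congr rfl fun i _ => ?_
  obtain h | h : f i = 0 ∨ f i = 1 := by generalize f i = c; revert c; decide
  all_goals simp [h]

section WeightSix

variable {m : ℕ}

/-- The exponent vector of the monomial `X₁ ^ a * (X₂ ⋯ Xₘ) ^ c`. -/
def monomialExponent (a c : ZMod 3) : Fin m → ZMod 3 := fun l => if l.val = 0 then a else c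

lemma monomialExponent_injective (hm : 2 ≤ m) :
    Function.Injective fun q : ZMod 3 × ZMod 3 => (monomialExponent q.1 q.2 : Fin m → ZMod 3) := by
  intro q q' h
  have h0 := congrFun h ⟨0, by omega⟩
  have h1 := congrFun h ⟨1, by omega⟩
  simp only [monomialExponent] at h0 h1
  exact Prod.ext (by simpa using h0) (by simpa using h1)

lemma dotp_monomialExponent (a c : ZMod 3) (j : Fin m → ZMod 3) :
    dotp (monomialExponent a c) j = a * ∑ l with l.val = 0, j l + c * ∑ l with l.val ≠ 0, j l := by
  simp only [dotp, monomialExponent, ite_mul, sum_ite, mul_sum]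

lemma sum_val_eq_zero_of_hammingNorm_eq_two {j : Fin m → ZMod 3} (hj : hammingNorm j = 2)
    (h : ∑ l with l.val ≠ 0, j l = 0) : ∑ l with l.val = 0, j l = 0 := by
  by_contra h0
  obtain ⟨l₀, hl₀, hjl₀⟩ := exists_ne_zero_of_sum_ne_zero h0
  rw [mem_filter] at hl₀
  obtain ⟨l₁, l₂, hl₁₂, hsupp⟩ := card_eq_two.mp hj
  have hmem : ∀ l, j l ≠ 0 ↔ l = l₁ ∨ l = l₂ := by simpa using Finset.ext_iff.mp hsupp
  obtain ⟨l', hl'₀, hl'⟩ : ∃ l', l' ≠ l₀ ∧ ∀ l, j l ≠ 0 ↔ l = l₀ ∨ l = l' := by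
    rcases (hmem l₀).mp hjl₀ with rfl | rfl
    · exact ⟨l₂, hl₁₂.symm, hmem⟩
    · exact ⟨l₁, hl₁₂, fun l => (hmem l).trans or_comm⟩
  have hval : ∀ l, l.val = 0 → l = l₀ := fun l hl => Fin.ext (hl.trans hl₀.2.symm)
  rw [sum_eq_single_of_mem l' (by simpa using mt (hval l') hl'₀)] at h
  · exact (hl' l').mpr (Or.inr rfl) h
  · intro l hl hll'
    by_contra hjl
    rcases (hl' l).mp hjl with rfl | rfl
    · exact (mem_filter.mp hl).2 hl₀.2
    · exact hll' rfl

def weightSixSupport (m : ℕ) : Finset (Fin m → ZMod 3) :=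
  (({1, 2} : Finset (ZMod 3)) ×ˢ univ).image fun q => monomialExponent q.1 q.2

def weightSixWord (m : ℕ) : (Fin m → ZMod 3) → ZMod 2 :=
  fun i => if i ∈ weightSixSupport m then 1 else 0

lemma support_weightSixWord :
    ({i | weightSixWord m i ≠ 0} : Finset (Fin m → ZMod 3)) = weightSixSupport m := by
  ext i
  simp [weightSixWord]

lemma hammingNorm_weightSixWord (hm : 2 ≤ m) : hammingNorm (weightSixWord m) = 6 := by
  rw [hammingNorm, support_weightSixWord, weightSixSupport,
    card_image_of_injective _ (monomialExponent_injective hm)]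
  rfl

lemma weightSixWord_mem_code (hm : 2 ≤ m) {α : F4} (hα : α ^ 2 = α + 1) :
    weightSixWord m ∈ code m α {n | n ≤ m ∧ n ≠ 2} := by
  intro j hj
  have hj2 : hammingNorm j = 2 := by
    by_contra h
    exact hj ⟨hammingNorm_le_card_fintype.trans (Fintype.card_fin m).le, h⟩
  rw [dft_eq_sum_support, support_weightSixWord, weightSixSupport,
    sum_image fun q _ q' _ h => monomialExponent_injective hm h, sum_product]
  simp only [dotp_monomialExponent]
  by_cases h₁ : ∑ l with l.val ≠ 0, j l = 0
  · simp only [h₁, sum_val_eq_zero_of_hammingNorm_eq_two hj2 h₁, mul_zero, add_zero,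
      ZMod.val_zero, pow_zero, sum_const, card_pair (show (1 : ZMod 3) ≠ 2 by decide)]
    exact CharTwo.two_nsmul _
  · exact sum_eq_zero fun a _ => sum_alpha_pow_add_mul hα _ h₁

end WeightSix

section Columns

variable {n : ℕ}

def PairBalanced (x y : Fin n → ZMod 3) : Prop :=
  ∀ v : ZMod 3, v ≠ 0 → IsBalanced fun k => x k + v * y k

instance (x y : Fin n → ZMod 3) : Decidable (PairBalanced x y) :=
  inferInstanceAs (Decidable (∀ _, _))

def IsLonely {β : Type*} (x : Fin n → β) (k : Fin n) : Prop := ∀ l, l ≠ k → x l ≠ x k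

instance {β : Type*} [DecidableEq β] (x : Fin n → β) (k : Fin n) : Decidable (IsLonely x k) :=
  inferInstanceAs (Decidable (∀ _, _))

lemma IsLonely.pair_left {β γ : Type*} {x : Fin n → β} {k : Fin n} (h : IsLonely x k)
    (y : Fin n → γ) : IsLonely (fun k => (x k, y k)) k :=
  fun l hl he => h l hl (congrArg Prod.fst he)

lemma exists_not_isLonely (hn : 3 < n) (x : Fin n → ZMod 3) : ∃ k, ¬IsLonely x k := by
  obtain ⟨k, l, hkl, hx⟩ := Fintype.exists_ne_map_eq_of_card_lt x (by simpa using hn)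
  exact ⟨k, fun h => h l hkl.symm hx.symm⟩

lemma not_isBalanced_fin_one (z : Fin 1 → ZMod 3) : ¬IsBalanced z := by
  revert z
  simp only [Fin.forall_fin_succ_pi, Fin.forall_fin_zero_pi, IsBalanced, Fin.sum_univ_succ,
    Fin.sum_univ_zero, Fin.cons_zero]
  decide

lemma PairBalanced.fin_two {x y : Fin 2 → ZMod 3} : PairBalanced x y → x 0 = x 1 := by
  revert x y
  simp only [Fin.forall_fin_succ_pi, Fin.forall_fin_zero_pi, PairBalanced, IsBalanced,
    Fin.sum_univ_succ, Fin.sum_univ_zero, Fin.cons_zero, Fin.cons_succ]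
  decide +kernel

lemma PairBalanced.fin_three {x y : Fin 3 → ZMod 3} :
    PairBalanced x y → ((∀ k, x k = x 0) ↔ ¬∀ k, y k = y 0) := by
  revert x y
  simp only [Fin.forall_fin_succ_pi, Fin.forall_fin_zero_pi, PairBalanced, IsBalanced,
    Fin.sum_univ_succ, Fin.sum_univ_zero, Fin.cons_zero, Fin.cons_succ]
  decide +kernel

lemma PairBalanced.fin_four {x y : Fin 4 → ZMod 3} :
    PairBalanced x y →
      ((∃ k, IsLonely x k) ∧ (∃ k, IsLonely y k) ∧ ∀ k, IsLonely x k ↔ ¬IsLonely y k) ∨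
      ∀ k, ¬IsLonely (fun k => (x k, y k)) k := by
  revert x y
  simp only [Fin.forall_fin_succ_pi, Fin.forall_fin_zero_pi, PairBalanced, IsBalanced,
    Fin.sum_univ_succ, Fin.sum_univ_zero, Fin.cons_zero, Fin.cons_succ]
  decide +kernel

set_option synthInstance.maxSize 1000 in
lemma eq_of_apply_eq_apply_zero_fin_four {x : Fin 4 → ZMod 3} (hx : ∀ k, ¬IsLonely x k)
    (hc : ∃ k, x k ≠ x 0) {l l' : Fin 4} (h0 : l ≠ 0) (h0' : l' ≠ 0) (hl : x l = x 0)
    (hl' : x l' = x 0) : l = l' := by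
  have key : ∀ (x : Fin 4 → ZMod 3) (l l' : Fin 4), (∀ k, ¬IsLonely x k) → (∃ k, x k ≠ x 0) →
      l ≠ 0 → l' ≠ 0 → x l = x 0 → x l' = x 0 → l = l' := by
    simp only [Fin.forall_fin_succ_pi, Fin.forall_fin_zero_pi]
    decide +kernel
  exact key x l l' hx hc h0 h0' hl hl'

/- For five points the search is run on columns normalised by `x 0 = y 0 = 0`, which leaves
`3 ^ 8` cases. -/

lemma PairBalanced.fin_five_of_isBalanced {x y : Fin 5 → ZMod 3} (hx : x 0 = 0) (hy : y 0 = 0) :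
    PairBalanced x y → IsBalanced y → ¬IsBalanced x ∧ ∀ k, ¬IsLonely x k := by
  obtain ⟨x, rfl⟩ : ∃ x' : Fin 4 → ZMod 3, x = Fin.cons 0 x' :=
    ⟨Fin.tail x, by rw [← hx, Fin.cons_self_tail]⟩
  obtain ⟨y, rfl⟩ : ∃ y' : Fin 4 → ZMod 3, y = Fin.cons 0 y' :=
    ⟨Fin.tail y, by rw [← hy, Fin.cons_self_tail]⟩
  clear hx hy
  revert x y
  simp only [Fin.forall_fin_succ_pi, Fin.forall_fin_zero_pi, PairBalanced, IsBalanced,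
    Fin.sum_univ_succ, Fin.sum_univ_zero, Fin.cons_zero, Fin.cons_succ]
  decide +kernel

set_option synthInstance.maxSize 1000 in
lemma PairBalanced.fin_five_of_not_isBalanced {x y : Fin 5 → ZMod 3} (hx : x 0 = 0)
    (hy : y 0 = 0) : PairBalanced x y → ¬IsBalanced x → ¬IsBalanced y →
      (∃ k, IsLonely x k) ∧ (∀ k, IsLonely x k ↔ IsLonely y k) ∧
      ∀ k, IsLonely (fun k => (x k, y k)) k := by
  obtain ⟨x, rfl⟩ : ∃ x' : Fin 4 → ZMod 3, x = Fin.cons 0 x' :=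
    ⟨Fin.tail x, by rw [← hx, Fin.cons_self_tail]⟩
  obtain ⟨y, rfl⟩ : ∃ y' : Fin 4 → ZMod 3, y = Fin.cons 0 y' :=
    ⟨Fin.tail y, by rw [← hy, Fin.cons_self_tail]⟩
  clear hx hy
  revert x y
  simp only [Fin.forall_fin_succ_pi, Fin.forall_fin_zero_pi, PairBalanced, IsBalanced,
    Fin.sum_univ_succ, Fin.sum_univ_zero, Fin.cons_zero, Fin.cons_succ]
  decide +kernel

end Columns

section LowerBound

variable {n m : ℕ}

def PairwiseBalanced (p : Fin n → Fin m → ZMod 3) : Prop :=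
  ∀ a b, a ≠ b → PairBalanced (fun k => p k a) (fun k => p k b)

lemma PairwiseBalanced.comp {m' : ℕ} {p : Fin n → Fin m → ZMod 3} (h : PairwiseBalanced p)
    {ι : Fin m' → Fin m} (hι : Function.Injective ι) : PairwiseBalanced fun k => p k ∘ ι :=
  fun a b hab => h (ι a) (ι b) (hι.ne hab)

lemma hammingNorm_single_add_single {a b : Fin m} (hab : a ≠ b) {v : ZMod 3} (hv : v ≠ 0) :
    hammingNorm (Pi.single a 1 + Pi.single b v : Fin m → ZMod 3) = 2 := by
  rw [hammingNorm, ← card_pair hab]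
  congr 1
  ext l
  rcases eq_or_ne l a with rfl | hla
  · simp [hab]
  · rcases eq_or_ne l b with rfl | hlb
    · simp [hla, hv]
    · simp [hla, hlb]

lemma dotp_single_add_single (i : Fin m → ZMod 3) (a b : Fin m) (v : ZMod 3) :
    dotp i (Pi.single a 1 + Pi.single b v) = i a + v * i b := by
  change i ⬝ᵥ _ = _
  rw [dotProduct_add, dotProduct_single, dotProduct_single, mul_one, mul_comm]

lemma sum_support_alpha_pow_eq_zero {α : F4} {f : (Fin m → ZMod 3) → ZMod 2}
    (hf : f ∈ code m α {n | n ≤ m ∧ n ≠ 2}) {a b : Fin m} (hab : a ≠ b) {v : ZMod 3}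
    (hv : v ≠ 0) : ∑ i ∈ {i | f i ≠ 0}, α ^ (i a + v * i b).val = 0 := by
  have h := hf (Pi.single a 1 + Pi.single b v) (by simp [hammingNorm_single_add_single hab hv])
  simpa only [dft_eq_sum_support, dotp_single_add_single] using h

lemma pairwiseBalanced_of_mem_code {α : F4} (hα : α ^ 2 = α + 1)
    {f : (Fin m → ZMod 3) → ZMod 2} (hf : f ∈ code m α {n | n ≤ m ∧ n ≠ 2})
    (p : Fin n ↪ (Fin m → ZMod 3)) (hp : univ.map p = ({i | f i ≠ 0} : Finset _))
    (c : Fin m → ZMod 3) : PairwiseBalanced fun k => p k - c := by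
  intro a b hab v hv
  have h := sum_support_alpha_pow_eq_zero hf hab hv
  rw [← hp, sum_map] at h
  have hshift (k : Fin n) :
      (p k - c) a + v * (p k - c) b = (p k a + v * p k b) + -(c a + v * c b) := by
    simp only [Pi.sub_apply]
    ring
  rw [← sum_alpha_pow_eq_zero_iff hα]
  simp only [hshift]
  rw [sum_congr rfl fun k _ => alpha_pow_val_add hα (p k a + v * p k b) _, ← sum_mul, h,
    zero_mul]

lemma Finset.exists_univ_map_eq {β : Type*} (s : Finset β) (hs : #s = n) :
    ∃ p : Fin n ↪ β, univ.map p = s :=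
  ⟨(s.equivFinOfCardEq hs).symm.toEmbedding.trans (Function.Embedding.subtype _), by
    rw [← map_map, univ_map_equiv_to_embedding, univ_eq_attach, attach_map_val]⟩

lemma not_pairwiseBalanced_fin_one (p : Fin 1 → Fin 2 → ZMod 3) : ¬PairwiseBalanced p :=
  fun h => not_isBalanced_fin_one _ (h 0 1 (by decide) 1 one_ne_zero)

lemma PairwiseBalanced.apply_zero_eq_apply_one (hm : 2 ≤ m) {p : Fin 2 → Fin m → ZMod 3}
    (h : PairwiseBalanced p) : p 0 = p 1 := by
  have : Nontrivial (Fin m) := Fin.nontrivial_iff_two_le.mpr hm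
  funext a
  obtain ⟨b, hb⟩ := exists_ne a
  exact (h a b hb.symm).fin_two

lemma not_pairwiseBalanced_fin_three (p : Fin 3 → Fin 3 → ZMod 3) : ¬PairwiseBalanced p := by
  intro h
  have h01 := (h 0 1 (by decide)).fin_three
  have h02 := (h 0 2 (by decide)).fin_three
  have h12 := (h 1 2 (by decide)).fin_three
  tauto

lemma PairwiseBalanced.not_isLonely_fin_four (hm : 3 ≤ m) {p : Fin 4 → Fin m → ZMod 3}
    (h : PairwiseBalanced p) {a b : Fin m} (hab : a ≠ b) (k : Fin 4) :
    ¬IsLonely (fun k => (p k a, p k b)) k := by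
  obtain ⟨c, -, hc⟩ := exists_mem_notMem_of_card_lt_card (s := {a, b}) (t := univ)
    (by simpa using card_le_two.trans_lt (by omega))
  simp only [mem_insert, mem_singleton, not_or] at hc
  rcases (h a b hab).fin_four with ⟨⟨i, hai⟩, ⟨j, hbj⟩, hab'⟩ | hpaired
  · exfalso
    rcases (h a c (Ne.symm hc.1)).fin_four with ⟨-, -, hac⟩ | hpaired
    · rcases (h b c (Ne.symm hc.2)).fin_four with ⟨-, -, hbc⟩ | hpaired
      · have := hab' 0
        have := hac 0
        have := hbc 0
        tauto
      · exact hpaired j (hbj.pair_left _)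
    · exact hpaired i (hai.pair_left _)
  · exact hpaired k

/- In a nonconstant column `a` without lonely entries, position `0` has a unique partner `l`;
pairing jointly with each other column `b` then forces `p l b = p 0 b`. -/
lemma PairwiseBalanced.not_injective_fin_four (hm : 3 ≤ m) {p : Fin 4 → Fin m → ZMod 3}
    (h : PairwiseBalanced p) : ¬Function.Injective p := by
  intro hp
  by_cases hconst : ∀ a k, p k a = p 0 a
  · exact absurd (hp (funext fun a => hconst a 1)) (by decide)
  push Not at hconst
  obtain ⟨a, k, hk⟩ := hconst
  have : Nontrivial (Fin m) := Fin.nontrivial_iff_two_le.mpr (by omega)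
  obtain ⟨b, hb⟩ := exists_ne a
  have hnl : ∀ k, ¬IsLonely (fun k => p k a) k :=
    fun k hl => h.not_isLonely_fin_four hm hb.symm k (hl.pair_left _)
  obtain ⟨l, hl0, hl⟩ : ∃ l, l ≠ 0 ∧ p l a = p 0 a := by simpa [IsLonely] using hnl 0
  refine hl0 (hp (funext fun b => ?_))
  rcases eq_or_ne b a with rfl | hb
  · exact hl
  obtain ⟨l', hl'0, hl'a, hl'b⟩ : ∃ l', l' ≠ 0 ∧ p l' a = p 0 a ∧ p l' b = p 0 b := by
    simpa [IsLonely] using h.not_isLonely_fin_four hm hb.symm 0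
  rwa [eq_of_apply_eq_apply_zero_fin_four hnl ⟨k, hk⟩ hl0 hl'0 hl hl'a]

/- If no column is balanced, all columns have the same lonely positions, among them some `s`.
For a position `t` that is not lonely, each of the four columns pairs `t` with some position
other than `s` and `t`; two columns choose the same one, contradicting their joint injectivity. -/
lemma not_pairwiseBalanced_fin_five (p : Fin 5 → Fin 4 → ZMod 3) (h0 : p 0 = 0) :
    ¬PairwiseBalanced p := by
  intro h
  have hcol (a : Fin 4) : p 0 a = 0 := by rw [h0, Pi.zero_apply]
  have hbal a b (hab : a ≠ b) := (h a b hab).fin_five_of_isBalanced (hcol a) (hcol b)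
  have hunbal a b (hab : a ≠ b) := (h a b hab).fin_five_of_not_isBalanced (hcol a) (hcol b)
  by_cases hc : ∃ c, IsBalanced fun k => p k c
  · obtain ⟨c, hc⟩ := hc
    obtain ⟨a, b, hab, hac, hbc⟩ : ∃ a b : Fin 4, a ≠ b ∧ a ≠ c ∧ b ≠ c := by
      clear hc; revert c; decide
    obtain ⟨ha, hna⟩ := hbal a c hac hc
    obtain ⟨⟨s, hs⟩, -⟩ := hunbal a b hab ha (hbal b c hbc hc).1
    exact hna s hs
  push Not at hc
  obtain ⟨⟨s, hs⟩, -⟩ := hunbal 0 1 (by decide) (hc 0) (hc 1)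
  obtain ⟨t, ht⟩ := exists_not_isLonely (by norm_num) fun k => p k 0
  have hlonely (a : Fin 4) (k : Fin 5) :
      IsLonely (fun k => p k a) k ↔ IsLonely (fun k => p k 0) k := by
    rcases eq_or_ne a 0 with rfl | ha
    · rfl
    · exact ((hunbal 0 a ha.symm (hc 0) (hc a)).2.1 k).symm
  have hts : t ≠ s := by rintro rfl; exact ht hs
  have hpartner (a : Fin 4) : ∃ u, u ≠ t ∧ p u a = p t a := by
    simpa [IsLonely] using (hlonely a t).not.mpr ht
  choose u hut hu using hpartner
  have hus (a : Fin 4) : u a ≠ s := fun hua => (hlonely a s).mpr hs t hts (hua ▸ hu a).symm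
  obtain ⟨a, -, b, -, hab, huab⟩ := exists_ne_map_eq_of_card_lt_of_maps_to
    (s := univ) (t := (univ.erase s).erase t) (f := u) (by simp [card_erase_of_mem, hts])
    (fun a _ => by simp [hut a, hus a])
  refine (hunbal a b hab (hc a) (hc b)).2.2 t (u a) (hut a) (Prod.ext (hu a) ?_)
  rw [huab]
  exact hu b

lemma PairwiseBalanced.not_injective (hm : 4 ≤ m) (hn : n ≤ 4)
    {p : Fin (n + 1) → Fin m → ZMod 3} (h0 : p 0 = 0) (h : PairwiseBalanced p) :
    ¬Function.Injective p := by
  have restrict {m'} (hm' : m' ≤ m) := h.comp (Fin.castLE_injective hm')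
  interval_cases n
  · exact fun _ => not_pairwiseBalanced_fin_one _ (restrict (by omega))
  · exact fun hp => absurd (hp (h.apply_zero_eq_apply_one (by omega))) (by decide)
  · exact fun _ => not_pairwiseBalanced_fin_three _ (restrict (by omega))
  · exact h.not_injective_fin_four (by omega)
  · exact fun _ => not_pairwiseBalanced_fin_five _ (by simp [h0]) (restrict hm)

lemma six_le_hammingNorm_of_mem_code (hm : 4 ≤ m) {α : F4} (hα : α ^ 2 = α + 1)
    {f : (Fin m → ZMod 3) → ZMod 2} (hf : f ∈ code m α {n | n ≤ m ∧ n ≠ 2}) (hf0 : f ≠ 0) :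
    6 ≤ hammingNorm f := by
  by_contra! hlt
  obtain ⟨n, hn⟩ := Nat.exists_eq_succ_of_ne_zero (hammingNorm_ne_zero_iff.mpr hf0)
  obtain ⟨p, hp⟩ := Finset.exists_univ_map_eq _ hn
  exact (pairwiseBalanced_of_mem_code hα hf p hp (p 0)).not_injective hm (by omega) (sub_self _)
    (sub_left_injective.comp p.injective)

end LowerBound

/-- for `m ≥ 4`, the minimum distance of
`BiD^⊥(m,2,2) = A(m, {0,…,m} \\ {2})` is exactly 6. -/
theorem stmt_15 (m : ℕ) (hm : 4 ≤ m) (α : F4) (hα : α ^ 2 = α + 1) :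
    (∃ f ∈ code m α {n | n ≤ m ∧ n ≠ 2}, hammingNorm f = 6) ∧
    (∀ f ∈ code m α {n | n ≤ m ∧ n ≠ 2}, f ≠ 0 → 6 ≤ hammingNorm f) :=
  ⟨⟨weightSixWord m, weightSixWord_mem_code (by omega) hα, hammingNorm_weightSixWord (by omega)⟩,
    fun _ hf hf0 => six_le_hammingNorm_of_mem_code hm hα hf hf0⟩
end

section
/- Projection property: let 1 ≤ ℓ ≤ w, let u, v ∈ (Z/3)^ℓ be distinct, and let f ∈ BiD(m,w,w) = A(m,{w}). Define p ∈ F_2^{3^{m−ℓ}} by p_{i'} = f_{(i',u)} + f_{(i',v)} for all i' ∈ (Z/3)^{m−ℓ}. Then p ∈ BiD(m−ℓ, w−ℓ, w−1) = A(m−ℓ, {w−ℓ,...,w−1}). -/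
open Finset

noncomputable def dft2 {m l : ℕ} (α : F4)
    (f : (Fin m → ZMod 3) × (Fin l → ZMod 3) → ZMod 2)
    (j : (Fin m → ZMod 3) × (Fin l → ZMod 3)) : F4 :=
  ∑ i : (Fin m → ZMod 3) × (Fin l → ZMod 3),
    toF4 (f i) * α ^ (dotp i.1 j.1 + dotp i.2 j.2).val

/-!
Inverting the DFT in the last `ℓ` coordinates only gives, for every `c ∈ (ℤ/3)^ℓ`,
`(f(·, c))^(j') = ∑_{j₂} α^{-c·j₂} f̂(j', j₂)`; the factor `3^{-ℓ}` of the inverse transform is `1`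
in characteristic `2`. Hence `p̂(j') = ∑_{j₂} (α^{-u·j₂} + α^{-v·j₂}) f̂(j', j₂)`. The term `j₂ = 0`
has coefficient `1 + 1 = 0`, and every other `j₂` has `1 ≤ wt j₂ ≤ ℓ`, so if
`wt j' ∉ [w - ℓ, w - 1]` then `wt j' + wt j₂ ≠ w` and `f̂(j', j₂) = 0`.
-/

section CubeRoot

variable {R : Type*} [CommRing R] {α : R}

lemma pow_three_eq_one_of_sq_eq_add_one [CharP R 2] (hα : α ^ 2 = α + 1) : α ^ 3 = 1 := by
  linear_combination (α + 1) * hα + α * CharTwo.two_eq_zero (R := R)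

lemma pow_val_add (h3 : α ^ 3 = 1) (a b : ZMod 3) :
    α ^ (a + b).val = α ^ a.val * α ^ b.val :=
  (AddChar.zmodChar 3 h3).map_add_eq_mul a b

lemma pow_val_sum (h3 : α ^ 3 = 1) {ι : Type*} (s : Finset ι) (g : ι → ZMod 3) :
    α ^ (∑ k ∈ s, g k).val = ∏ k ∈ s, α ^ (g k).val := by
  have := map_prod (AddChar.zmodChar 3 h3).toMonoidHom (fun k => Multiplicative.ofAdd (g k)) s
  rwa [← ofAdd_sum] at this

variable [CharP R 2]

lemma sum_pow_val_mul (hα : α ^ 2 = α + 1) (c : ZMod 3) :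
    ∑ t : ZMod 3, α ^ (c * t).val = if c = 0 then 1 else 0 := by
  have h2 : (2 : R) = 0 := CharTwo.two_eq_zero
  split_ifs with hc
  · simp only [hc, zero_mul, ZMod.val_zero, pow_zero, sum_const, card_univ, ZMod.card,
      nsmul_eq_mul, mul_one]
    linear_combination h2
  · rw [Fintype.sum_equiv (Equiv.mulLeft₀ c hc) (fun t => α ^ (c * t).val) (fun t => α ^ t.val)
      fun _ => rfl]
    refine (Fin.sum_univ_three (fun t : ZMod 3 => α ^ t.val)).trans ?_
    change α ^ 0 + α ^ 1 + α ^ 2 = 0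
    linear_combination hα + (α + 1) * h2

lemma sum_pow_val_dotp (hα : α ^ 2 = α + 1) {l : ℕ} (d : Fin l → ZMod 3) :
    ∑ j : Fin l → ZMod 3, α ^ (dotp d j).val = if d = 0 then 1 else 0 := by
  have h3 := pow_three_eq_one_of_sq_eq_add_one hα
  simp_rw [dotp, pow_val_sum h3]
  rw [← Fintype.prod_sum fun k t => α ^ (d k * t).val]
  simp_rw [sum_pow_val_mul hα]
  split_ifs with hd
  · simp [hd]
  · obtain ⟨k, hk⟩ := Function.ne_iff.mp hd
    exact prod_eq_zero (mem_univ k) (if_neg hk)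

end CubeRoot

lemma dft_add {m : ℕ} (α : F4) (f g : (Fin m → ZMod 3) → ZMod 2) (j : Fin m → ZMod 3) :
    dft α (f + g) j = dft α f j + dft α g j := by
  simp only [dft, Pi.add_apply, map_add, add_mul, sum_add_distrib]

lemma sum_pow_neg_dotp_mul_dft2 {m l : ℕ} {α : F4} (hα : α ^ 2 = α + 1)
    (f : (Fin m → ZMod 3) × (Fin l → ZMod 3) → ZMod 2) (c : Fin l → ZMod 3)
    (j' : Fin m → ZMod 3) :
    ∑ j₂, α ^ (-dotp c j₂).val * dft2 α f (j', j₂) = dft α (fun i => f (i, c)) j' := by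
  have h3 := pow_three_eq_one_of_sq_eq_add_one hα
  have hshift : ∀ i₂ j₂ : Fin l → ZMod 3,
      α ^ (-dotp c j₂).val * α ^ (dotp i₂ j₂).val = α ^ (dotp (i₂ - c) j₂).val := by
    intro i₂ j₂
    rw [← pow_val_add h3, dotp, dotp, dotp, ← sum_neg_distrib, ← sum_add_distrib]
    simp only [Pi.sub_apply, sub_mul, neg_add_eq_sub]
  calc ∑ j₂, α ^ (-dotp c j₂).val * dft2 α f (j', j₂)
      = ∑ i : (Fin m → ZMod 3) × (Fin l → ZMod 3), toF4 (f i) * α ^ (dotp i.1 j').val *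
          ∑ j₂, α ^ (dotp (i.2 - c) j₂).val := by
        simp only [dft2, mul_sum, pow_val_add h3, ← hshift]
        rw [sum_comm]
        exact sum_congr rfl fun _ _ => sum_congr rfl fun _ _ => by ring
    _ = dft α (fun i => f (i, c)) j' := by
        simp only [sum_pow_val_dotp hα, sub_eq_zero, mul_ite, mul_one, mul_zero,
          Fintype.sum_prod_type, sum_ite_eq', mem_univ, if_true, dft]

theorem stmt_17_general (m l w : ℕ)
    (α : F4) (hα : α ^ 2 = α + 1)
    (u v : Fin l → ZMod 3)
    (f : (Fin m → ZMod 3) × (Fin l → ZMod 3) → ZMod 2)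
    (hf : ∀ j : (Fin m → ZMod 3) × (Fin l → ZMod 3),
      hammingNorm j.1 + hammingNorm j.2 ≠ w → dft2 α f j = 0) :
    (fun i' => f (i', u) + f (i', v)) ∈
      code m α {n | w - l ≤ n ∧ n ≤ w - 1} := by
  intro j' hj'
  change dft α ((fun i => f (i, u)) + fun i => f (i, v)) j' = 0
  rw [dft_add, ← sum_pow_neg_dotp_mul_dft2 hα, ← sum_pow_neg_dotp_mul_dft2 hα, ← sum_add_distrib]
  refine sum_eq_zero fun j₂ _ => ?_
  by_cases h0 : j₂ = 0
  · subst h0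
    simp [dotp, CharTwo.add_self_eq_zero]
  · have hle : hammingNorm j₂ ≤ l := by
      simpa using hammingNorm_le_card_fintype (x := j₂)
    have hpos := hammingNorm_pos_iff.mpr h0
    have hw : hammingNorm j' + hammingNorm j₂ ≠ w := by
      simp only [Set.mem_ofPred_eq] at hj'
      omega
    rw [hf (j', j₂) hw, mul_zero, mul_zero, add_zero]

/-- projection property: if `f ∈ BiD(m+ℓ, w, w) = A(m+ℓ, {w})`
(indices split as pairs in `(ZMod 3)^m × (ZMod 3)^ℓ`), `1 ≤ ℓ ≤ w`, and `u ≠ v`,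
then `p = (i' ↦ f(i',u) + f(i',v))` lies in
`BiD(m, w-ℓ, w-1) = A(m, {w-ℓ,…,w-1})`. -/
theorem stmt_17 (m l w : ℕ) (hl : 1 ≤ l) (hlw : l ≤ w)
    (α : F4) (hα : α ^ 2 = α + 1)
    (u v : Fin l → ZMod 3) (huv : u ≠ v)
    (f : (Fin m → ZMod 3) × (Fin l → ZMod 3) → ZMod 2)
    (hf : ∀ j : (Fin m → ZMod 3) × (Fin l → ZMod 3),
      hammingNorm j.1 + hammingNorm j.2 ≠ w → dft2 α f j = 0) :
    (fun i' => f (i', u) + f (i', v)) ∈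
      code m α {n | w - l ≤ n ∧ n ≤ w - 1} :=
  stmt_17_general m l w α hα u v f hf
end
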